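/- Let (L, [·,·], ρ) be a Lie–Rinehart algebra over R and ∇ : Der(R) × L → L a connection, with curvature R_∇. Then for all X₁, X₂ ∈ Der(R) and a₁, a₂ ∈ L the following identity (matched pair condition (M9) for the tangent double of a Lie algebroid) holds: −Rᵇᵃˢ_∇(a₁,a₂)[X₁,X₂] + ∇_{X₁}(Rᵇᵃˢ_∇(a₁,a₂)X₂) − ∇_{X₂}(Rᵇᵃˢ_∇(a₁,a₂)X₁) − Rᵇᵃˢ_∇(∇_{X₁}a₁,a₂)X₂ − Rᵇᵃˢ_∇(a₁,∇_{X₁}a₂)X₂ + Rᵇᵃˢ_∇(∇_{X₂}a₁,a₂)X₁ + Rᵇᵃˢ_∇(a₁,∇_{X₂}a₂)X₁ = −R_∇(X₁,X₂)[a₁,a₂] + ∇ᵇᵃˢ_{a₁}(R_∇(X₁,X₂)a₂) − ∇ᵇᵃˢ_{a₂}(R_∇(X₁,X₂)a₁) − R_∇(∇ᵇᵃˢ_{a₁}X₁, X₂)a₂ − R_∇(X₁, ∇ᵇᵃˢ_{a₁}X₂)a₂ + R_∇(∇ᵇᵃˢ_{a₂}X₁, X₂)a₁ + R_∇(X₁,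 ∇ᵇᵃˢ_{a₂}X₂)a₁. -/

import Mathlib

/-- A Lie–Rinehart algebra over a commutative `ℝ`-algebra `R`: an `R`-module `L`
with an `ℝ`-bilinear Lie bracket and an `R`-linear anchor `ρ : L → Der(R)` which is a
morphism of Lie algebras and satisfies the Leibniz rule. -/
structure LieRinehart (R : Type*) [CommRing R] [Algebra ℝ R]
    (L : Type*) [AddCommGroup L] [Module R L] where
  bracket : L → L → L
  bracket_add_left : ∀ x y z : L, bracket (x + y) z = bracket x z + bracket y z
  bracket_add_right : ∀ x y z : L, bracket x (y + z) = bracket x y + bracket x z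
  bracket_real_left : ∀ (r : ℝ) (x y : L),
    bracket ((algebraMap ℝ R r) • x) y = (algebraMap ℝ R r) • bracket x y
  bracket_real_right : ∀ (r : ℝ) (x y : L),
    bracket x ((algebraMap ℝ R r) • y) = (algebraMap ℝ R r) • bracket x y
  bracket_antisymm : ∀ x y : L, bracket x y = - bracket y x
  bracket_jacobi : ∀ x y z : L,
    bracket x (bracket y z) = bracket (bracket x y) z + bracket y (bracket x z)
  anchor : L →ₗ[R] Derivation ℝ R R
  anchor_bracket : ∀ x y : L, anchor (bracket x y) = ⁅anchor x, anchor y⁆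
  leibniz : ∀ (f : R) (x y : L),
    bracket x (f • y) = f • bracket x y + (anchor x f) • y

/-- A connection on the `R`-module `E` along `Der(R)`. -/
structure DerConnection (R : Type*) [CommRing R] [Algebra ℝ R]
    (E : Type*) [AddCommGroup E] [Module R E] where
  conn : Derivation ℝ R R → E → E
  conn_add_left : ∀ (X Y : Derivation ℝ R R) (e : E), conn (X + Y) e = conn X e + conn Y e
  conn_add_right : ∀ (X : Derivation ℝ R R) (e e' : E), conn X (e + e') = conn X e + conn X e'
  conn_smul_left : ∀ (f : R) (X : Derivation ℝ R R) (e : E), conn (f • X) e = f • conn X e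
  conn_leibniz : ∀ (f : R) (X : Derivation ℝ R R) (e : E),
    conn X (f • e) = f • conn X e + (X f) • e

variable {R : Type*} [CommRing R] [Algebra ℝ R]
variable {L : Type*} [AddCommGroup L] [Module R L]

/-- The curvature `R_∇(X,Y)e = ∇_X ∇_Y e − ∇_Y ∇_X e − ∇_{[X,Y]} e` of a connection. -/
def DerConnection.curv {E : Type*} [AddCommGroup E] [Module R E]
    (N : DerConnection R E) (X Y : Derivation ℝ R R) (e : E) : E :=
  N.conn X (N.conn Y e) - N.conn Y (N.conn X e) - N.conn ⁅X, Y⁆ e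

/-- The basic connection `∇ᵇᵃˢ : L × L → L`, `∇ᵇᵃˢ_a a' = [a,a'] + ∇_{ρ(a')} a`. -/
def basL (LR : LieRinehart R L) (N : DerConnection R L) (a a' : L) : L :=
  LR.bracket a a' + N.conn (LR.anchor a') a

/-- The basic connection `∇ᵇᵃˢ : L × Der(R) → Der(R)`, `∇ᵇᵃˢ_a X = [ρ(a),X] + ρ(∇_X a)`. -/
def basD (LR : LieRinehart R L) (N : DerConnection R L) (a : L) (X : Derivation ℝ R R) :
    Derivation ℝ R R :=
  ⁅LR.anchor a, X⁆ + LR.anchor (N.conn X a)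

/-- The basic curvature `Rᵇᵃˢ_∇ : L × L × Der(R) → L`. -/
def basCurv (LR : LieRinehart R L) (N : DerConnection R L) (a₁ a₂ : L)
    (X : Derivation ℝ R R) : L :=
  - N.conn X (LR.bracket a₁ a₂) + LR.bracket (N.conn X a₁) a₂ + LR.bracket a₁ (N.conn X a₂)
    + N.conn (basD LR N a₂ X) a₁ - N.conn (basD LR N a₁ X) a₂

/-!
After expanding by biadditivity of `∇`, `[·,·]` and the bracket of `Der(R)`, the identity is
formal: the terms `[∇∇ a₁, a₂]` on the left match the terms `[a₂, ∇∇ a₁]` of `∇ᵇᵃˢ_{a₂}` on the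
right by antisymmetry in `L`; each `∇_{[ρ a, [X₁,X₂]]}` on the left splits, by the Jacobi identity
of `Der(R)`, into the terms `∇_{[[ρ a, X₁], X₂]}` and `∇_{[X₁, [ρ a, X₂]]}` of
`R_∇(∇ᵇᵃˢ_a X₁, X₂)` and `R_∇(X₁, ∇ᵇᵃˢ_a X₂)`; and the terms `∇_{[X₁, ρ ∇_{X₂} a]}` on the right
cancel against `∇_{[ρ ∇_{X₂} a, X₁]}` on the left by antisymmetry in `Der(R)`.
-/

namespace DerConnection

variable {E : Type*} [AddCommGroup E] [Module R E] (N : DerConnection R E)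

theorem conn_neg_left (X : Derivation ℝ R R) (e : E) : N.conn (-X) e = -N.conn X e :=
  (AddMonoidHom.mk' (N.conn · e) (N.conn_add_left · · e)).map_neg X

theorem conn_sub_left (X Y : Derivation ℝ R R) (e : E) :
    N.conn (X - Y) e = N.conn X e - N.conn Y e :=
  (AddMonoidHom.mk' (N.conn · e) (N.conn_add_left · · e)).map_sub X Y

theorem conn_neg_right (X : Derivation ℝ R R) (e : E) : N.conn X (-e) = -N.conn X e :=
  (AddMonoidHom.mk' (N.conn X) (N.conn_add_right X)).map_neg e

theorem conn_sub_right (X : Derivation ℝ R R) (e e' : E) :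
    N.conn X (e - e') = N.conn X e - N.conn X e' :=
  (AddMonoidHom.mk' (N.conn X) (N.conn_add_right X)).map_sub e e'

end DerConnection

theorem LieRinehart.bracket_sub_right (LR : LieRinehart R L) (x y z : L) :
    LR.bracket x (y - z) = LR.bracket x y - LR.bracket x z :=
  (AddMonoidHom.mk' (LR.bracket x) (LR.bracket_add_right x)).map_sub y z

open LieRinehart DerConnection in
/-- matched pair condition (M9) for the tangent double of a Lie algebroid. -/
theorem matched_pair_M9
    (LR : LieRinehart R L) (N : DerConnection R L) :
    ∀ (X₁ X₂ : Derivation ℝ R R) (a₁ a₂ : L),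
      - basCurv LR N a₁ a₂ ⁅X₁, X₂⁆
      + N.conn X₁ (basCurv LR N a₁ a₂ X₂) - N.conn X₂ (basCurv LR N a₁ a₂ X₁)
      - basCurv LR N (N.conn X₁ a₁) a₂ X₂ - basCurv LR N a₁ (N.conn X₁ a₂) X₂
      + basCurv LR N (N.conn X₂ a₁) a₂ X₁ + basCurv LR N a₁ (N.conn X₂ a₂) X₁
      = - N.curv X₁ X₂ (LR.bracket a₁ a₂)
        + basL LR N a₁ (N.curv X₁ X₂ a₂) - basL LR N a₂ (N.curv X₁ X₂ a₁)
        - N.curv (basD LR N a₁ X₁) X₂ a₂ - N.curv X₁ (basD LR N a₁ X₂) a₂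
        + N.curv (basD LR N a₂ X₁) X₂ a₁ + N.curv X₁ (basD LR N a₂ X₂) a₁ := by
  intro X₁ X₂ a₁ a₂
  simp only [basCurv, basL, basD, curv, map_sub, bracket_sub_right, N.conn_add_left,
    N.conn_add_right, conn_sub_left, conn_sub_right, conn_neg_right, lie_add, add_lie]
  rw [LR.bracket_antisymm (N.conn ⁅X₁, X₂⁆ a₁) a₂,
    LR.bracket_antisymm (N.conn X₂ (N.conn X₁ a₁)) a₂,
    LR.bracket_antisymm (N.conn X₁ (N.conn X₂ a₁)) a₂,
    leibniz_lie (LR.anchor a₁) X₁ X₂, leibniz_lie (LR.anchor a₂) X₁ X₂,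
    ← lie_skew (LR.anchor (N.conn X₂ a₁)) X₁, ← lie_skew (LR.anchor (N.conn X₂ a₂)) X₁]
  simp only [N.conn_add_left, conn_neg_left]
  abel
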